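/- Let E be a directed graph, K a field, and x ∈ ∂E. The simple L_K(E)-module V_{[x]} admits a ℤ-grading making it a graded L_K(E)-module (i.e., a decomposition V_{[x]} = ⊕_{k∈ℤ} W_k into K-subspaces with (L_K(E))_m W_k ⊆ W_{m+k} for all m, k) if and only if x is not a rational path. -/

import Mathlib

open scoped Classical

/-- A directed graph: vertices, edges, source and range maps. -/
structure DirGraph : Type 1 where
  V : Type
  E : Type
  s : E → V
  r : E → V

namespace DirGraph

variable (G : DirGraph)

/-- A finite path: a source vertex together with a compatible list of edges
(the empty list gives the path of length 0 at `src`). -/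
structure FinPath where
  src : G.V
  edges : List G.E
  src_eq : ∀ e ∈ edges.head?, G.s e = src
  chain : edges.Chain' (fun e f => G.r e = G.s f)

variable {G}

/-- The range of a finite path. -/
def FinPath.rng (μ : G.FinPath) : G.V :=
  ((μ.edges.getLast?).map G.r).getD μ.src

/-- The length of a finite path. -/
def FinPath.length (μ : G.FinPath) : ℕ := μ.edges.length

variable (G)

/-- An infinite path. -/
structure InfPath where
  edges : ℕ → G.E
  chain : ∀ n, G.r (edges n) = G.s (edges (n + 1))

/-- The source of an infinite path. -/
def InfPath.src {G : DirGraph} (p : G.InfPath) : G.V := G.s (p.edges 0)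

def IsSink (v : G.V) : Prop := ∀ e, G.s e ≠ v

def IsInfEmitter (v : G.V) : Prop := {e | G.s e = v}.Infinite

def IsSingular (v : G.V) : Prop := IsSink G v ∨ IsInfEmitter G v

/-- Boundary paths: infinite paths, together with finite paths ending in a singular vertex. -/
def BPath : Type := {x : G.FinPath ⊕ G.InfPath // ∀ μ, x = Sum.inl μ → IsSingular G μ.rng}

variable {G}

/-- The source of a boundary path. -/
def BPath.src (x : G.BPath) : G.V :=
  match x.1 with
  | Sum.inl μ => μ.src
  | Sum.inr p => p.src

def BPath.IsInfinite (x : G.BPath) : Prop := ∃ p, x.1 = Sum.inr p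

/-- `IsCat μ p x` means `x = μ p`, i.e. `x` is the concatenation of the finite path `μ`
with the boundary path `p` (in particular `r(μ) = s(p)`). -/
def IsCat (μ : G.FinPath) (p x : G.BPath) : Prop :=
  μ.rng = p.src ∧
  match p.1, x.1 with
  | Sum.inl q, Sum.inl ξ => ξ.src = μ.src ∧ ξ.edges = μ.edges ++ q.edges
  | Sum.inr q, Sum.inr ξ =>
      (∀ (i : ℕ) (h : i < μ.edges.length), ξ.edges i = μ.edges.get ⟨i, h⟩) ∧
      (∀ i : ℕ, ξ.edges (μ.edges.length + i) = q.edges i)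
  | _, _ => False

/-- `x ∼_k y` : tail equivalence with lag `k`. -/
def TailEqLag (x y : G.BPath) (k : ℤ) : Prop :=
  ∃ (μ ν : G.FinPath) (p : G.BPath),
    IsCat μ p x ∧ IsCat ν p y ∧ (μ.length : ℤ) - (ν.length : ℤ) = k

/-- Tail equivalence. -/
def TailEq (x y : G.BPath) : Prop := ∃ k, TailEqLag x y k

/-- The tail-equivalence class (orbit) of a boundary path. -/
def orbit (x : G.BPath) : Set G.BPath := {y | TailEq y x}

/-- A closed path: positive length, same source and range. -/
def FinPath.IsClosed (c : G.FinPath) : Prop := 0 < c.length ∧ c.rng = c.src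

/-- A boundary path is rational if it is tail equivalent to `c^∞` for some closed path `c`;
here `c^∞` is characterized as the unique boundary path `p` with `p = c p`. -/
def IsRational (x : G.BPath) : Prop :=
  ∃ (c : G.FinPath) (p : G.BPath), 0 < c.length ∧ IsCat c p p ∧ TailEq x p

/-- A simple closed path: a closed path which is not a proper power of a closed path. -/
def FinPath.IsSimpleClosed (c : G.FinPath) : Prop :=
  c.IsClosed ∧
    ¬ ∃ (d : G.FinPath) (n : ℕ), 2 ≤ n ∧ d.IsClosed ∧ c.src = d.src ∧
        c.edges = (List.replicate n d.edges).flatten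

/-- A cycle: a closed path passing through no vertex twice. -/
def FinPath.IsCycle (c : G.FinPath) : Prop := c.IsClosed ∧ (c.edges.map G.s).Nodup

/-- An exit for a finite path. -/
def FinPath.HasExit (c : G.FinPath) : Prop :=
  ∃ (i : ℕ) (h : i < c.edges.length) (e : G.E),
    G.s e = G.s (c.edges.get ⟨i, h⟩) ∧ e ≠ c.edges.get ⟨i, h⟩

/-- `c` is a rotation of `d`. -/
def FinPath.IsRotationOf (c d : G.FinPath) : Prop := ∃ i, c.edges = d.edges.rotate i

/-- A maximal cycle: a cycle such that any cycle from which there is a finite path to its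
source is a rotation of it. -/
def FinPath.IsMaxCycle (c : G.FinPath) : Prop :=
  c.IsCycle ∧ ∀ d : G.FinPath, d.IsCycle →
    (∃ μ : G.FinPath, μ.src = d.src ∧ μ.rng = c.src) → d.IsRotationOf c

/-- A maximal sink: a sink with no finite path from the source of any cycle to it. -/
def IsMaxSink (G : DirGraph) (v : G.V) : Prop :=
  IsSink G v ∧ ¬ ∃ (d μ : G.FinPath), d.IsCycle ∧ μ.src = d.src ∧ μ.rng = v

/-- A graph is row-finite if every vertex emits finitely many edges. -/
def RowFinite (G : DirGraph) : Prop := ∀ v : G.V, {e | G.s e = v}.Finite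

/-- The set of predecessors of a vertex. -/
def preds (G : DirGraph) (v : G.V) : Set G.V := {w | ∃ μ : G.FinPath, μ.src = w ∧ μ.rng = v}

/-- The finite path of length 0 at a vertex. -/
def vertexPath (G : DirGraph) (v : G.V) : G.FinPath :=
  ⟨v, [], by intro e he; simp at he, List.isChain_nil⟩

/-- A singular vertex, seen as a boundary path. -/
def vertexBPath (G : DirGraph) (v : G.V) (h : IsSingular G v) : G.BPath :=
  ⟨Sum.inl (vertexPath G v), by
    intro μ hμ
    injection hμ with h2
    subst h2
    exact h⟩

/-- The finite path consisting of a single edge. -/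
def singleE (G : DirGraph) (e : G.E) : G.FinPath :=
  ⟨G.s e, [e], by
    intro f hf
    simp only [List.head?_cons, Option.mem_def, Option.some.injEq] at hf
    subst hf
    rfl, List.isChain_singleton e⟩

/-- `a_μ`: the product of the values of `a` along a finite path. -/
def aval {G : DirGraph} {K : Type} [Field K] (a : G.E → K) (μ : G.FinPath) : K :=
  (μ.edges.map a).prod

/-! ## The Leavitt path algebra -/

/-- Generators of the Leavitt path algebra: vertices, edges and ghost edges. -/
inductive Gen (G : DirGraph) : Type
  | vtx : G.V → Gen G
  | edg : G.E → Gen G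
  | ghd : G.E → Gen G

/-- The defining relations of the Leavitt path algebra. -/
inductive LRel (G : DirGraph) (K : Type) [Field K] :
    FreeAlgebra K (Gen G) → FreeAlgebra K (Gen G) → Prop
  | vv_eq (v : G.V) :
      LRel G K (FreeAlgebra.ι K (Gen.vtx v) * FreeAlgebra.ι K (Gen.vtx v))
        (FreeAlgebra.ι K (Gen.vtx v))
  | vv_ne {v w : G.V} (h : v ≠ w) :
      LRel G K (FreeAlgebra.ι K (Gen.vtx v) * FreeAlgebra.ι K (Gen.vtx w)) 0
  | e1l (e : G.E) :
      LRel G K (FreeAlgebra.ι K (Gen.vtx (G.s e)) * FreeAlgebra.ι K (Gen.edg e))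
        (FreeAlgebra.ι K (Gen.edg e))
  | e1r (e : G.E) :
      LRel G K (FreeAlgebra.ι K (Gen.edg e) * FreeAlgebra.ι K (Gen.vtx (G.r e)))
        (FreeAlgebra.ι K (Gen.edg e))
  | e2l (e : G.E) :
      LRel G K (FreeAlgebra.ι K (Gen.vtx (G.r e)) * FreeAlgebra.ι K (Gen.ghd e))
        (FreeAlgebra.ι K (Gen.ghd e))
  | e2r (e : G.E) :
      LRel G K (FreeAlgebra.ι K (Gen.ghd e) * FreeAlgebra.ι K (Gen.vtx (G.s e)))
        (FreeAlgebra.ι K (Gen.ghd e))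
  | ck1_eq (e : G.E) :
      LRel G K (FreeAlgebra.ι K (Gen.ghd e) * FreeAlgebra.ι K (Gen.edg e))
        (FreeAlgebra.ι K (Gen.vtx (G.r e)))
  | ck1_ne {e f : G.E} (h : e ≠ f) :
      LRel G K (FreeAlgebra.ι K (Gen.ghd e) * FreeAlgebra.ι K (Gen.edg f)) 0
  | ck2 (v : G.V) (hfin : {e | G.s e = v}.Finite) (hne : ∃ e, G.s e = v) :
      LRel G K (FreeAlgebra.ι K (Gen.vtx v))
        (∑ e ∈ hfin.toFinset, FreeAlgebra.ι K (Gen.edg e) * FreeAlgebra.ι K (Gen.ghd e))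

/-- The Leavitt path algebra of `G` over `K`. -/
abbrev LPA (G : DirGraph) (K : Type) [Field K] : Type := RingQuot (LRel G K)

/-- The image of a vertex in the Leavitt path algebra. -/
def ofV (G : DirGraph) (K : Type) [Field K] (v : G.V) : LPA G K :=
  RingQuot.mkAlgHom K (LRel G K) (FreeAlgebra.ι K (Gen.vtx v))

/-- The image of an edge in the Leavitt path algebra. -/
def ofE (G : DirGraph) (K : Type) [Field K] (e : G.E) : LPA G K :=
  RingQuot.mkAlgHom K (LRel G K) (FreeAlgebra.ι K (Gen.edg e))

/-- The image of a ghost edge in the Leavitt path algebra. -/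
def ofG (G : DirGraph) (K : Type) [Field K] (e : G.E) : LPA G K :=
  RingQuot.mkAlgHom K (LRel G K) (FreeAlgebra.ι K (Gen.ghd e))

/-- The element `μ` of the Leavitt path algebra associated to a finite path `μ`. -/
def pathElem (G : DirGraph) (K : Type) [Field K] (μ : G.FinPath) : LPA G K :=
  ofV G K μ.src * (μ.edges.map (ofE G K)).prod

/-- The element `μ^*` of the Leavitt path algebra associated to a finite path `μ`. -/
def pathStarElem (G : DirGraph) (K : Type) [Field K] (μ : G.FinPath) : LPA G K :=
  (μ.edges.reverse.map (ofG G K)).prod * ofV G K μ.src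

/-- The degree-`n` homogeneous component of the canonical `ℤ`-grading of the Leavitt
path algebra: the span of the monomials `μ ν^*` with `|μ| - |ν| = n`. -/
def LPAdeg (G : DirGraph) (K : Type) [Field K] (n : ℤ) : Submodule K (LPA G K) :=
  Submodule.span K {x | ∃ μ ν : G.FinPath, μ.rng = ν.rng ∧
    (μ.length : ℤ) - (ν.length : ℤ) = n ∧ x = pathElem G K μ * pathStarElem G K ν}

/-- `W` is a `ℤ`-grading making `M` a graded module over the canonically graded
Leavitt path algebra. -/
def IsModuleGrading (G : DirGraph) (K : Type) [Field K] (M : Type) [AddCommGroup M]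
    [Module K M] [Module (LPA G K) M] (W : ℤ → Submodule K M) : Prop :=
  DirectSum.IsInternal W ∧
    ∀ (m k : ℤ) (a : LPA G K) (y : M), a ∈ LPAdeg G K m → y ∈ W k → a • y ∈ W (m + k)

/-- A set is graded (with respect to a grading `W`) if each of its elements is a finite sum
of homogeneous elements of the set. -/
def GradedCarrier {K M : Type} [Field K] [AddCommGroup M] [Module K M]
    (W : ℤ → Submodule K M) (S : Set M) : Prop :=
  ∀ m ∈ S, ∃ l : List M, (∀ z ∈ l, z ∈ S ∧ ∃ k, z ∈ W k) ∧ l.sum = m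

/-- A graded isomorphism between graded modules over the Leavitt path algebra. -/
def GradedIsoLPA (G : DirGraph) (K : Type) [Field K] (M N : Type)
    [AddCommGroup M] [AddCommGroup N] [Module K M] [Module K N]
    [Module (LPA G K) M] [Module (LPA G K) N]
    (W : ℤ → Submodule K M) (W' : ℤ → Submodule K N) : Prop :=
  ∃ f : M ≃ₗ[LPA G K] N, (∀ k, ∀ m ∈ W k, f m ∈ W' k) ∧ ∀ k, ∀ n ∈ W' k, f.symm n ∈ W k

/-- A module over the Leavitt path algebra is unital if it is generated by the images of the
vertices. -/
def IsUnitalModule (G : DirGraph) (K : Type) [Field K] (M : Type) [AddCommGroup M]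
    [Module (LPA G K) M] : Prop :=
  ∀ m : M, m ∈ Submodule.span (LPA G K) {y : M | ∃ (v : G.V) (m' : M), y = ofV G K v • m'}

/-! ## Chen modules, specified by a basis and the action of the generators -/

/-- A specification of the (twisted) Chen module attached to a boundary path `x`:
an `L_K(E)`-module `M` which is a `K'`-vector space with basis the tail-equivalence class
of `x`, the generators acting by the τ-twisted shift formulas. Here `K ⊆ K'` is a field
extension and `τ : E¹ → K'` is a family of nonzero scalars. -/
structure ChenSpecT (G : DirGraph) (K K' : Type) [Field K] [Field K'] [Algebra K K']
    (τ : G.E → K') (x : G.BPath) (M : Type) [AddCommGroup M] [Module K' M]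
    [Module (LPA G K) M] : Type where
  tau_ne : ∀ e, τ e ≠ 0
  basis : Module.Basis (orbit x) K' M
  act_v : ∀ (v : G.V) (p : orbit x),
    ofV G K v • basis p = if v = BPath.src (p : G.BPath) then basis p else 0
  act_e : ∀ (e : G.E) (p q : orbit x), IsCat (singleE G e) (p : G.BPath) (q : G.BPath) →
    ofE G K e • basis p = τ e • basis q
  act_e_zero : ∀ (e : G.E) (p : orbit x),
    (¬ ∃ q : G.BPath, IsCat (singleE G e) (p : G.BPath) q) → ofE G K e • basis p = 0
  act_g : ∀ (e : G.E) (p q : orbit x), IsCat (singleE G e) (p : G.BPath) (q : G.BPath) →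
    ofG G K e • basis q = (τ e)⁻¹ • basis p
  act_g_zero : ∀ (e : G.E) (q : orbit x),
    (¬ ∃ p : G.BPath, IsCat (singleE G e) p (q : G.BPath)) → ofG G K e • basis q = 0

/-- Specification of the Chen module `V_{[x]}^a` twisted by `a : E¹ → K^*`
(`a = 1` gives `V_{[x]}`). -/
abbrev ChenSpec (G : DirGraph) (K : Type) [Field K] (a : G.E → K) (x : G.BPath) (M : Type)
    [AddCommGroup M] [Module K M] [Module (LPA G K) M] : Type :=
  ChenSpecT G K K a x M

/-- The canonical grading on a Chen module: the degree-`k` component is spanned by the basis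
elements tail-equivalent to `x` with lag `k`. -/
def chenW {G : DirGraph} {K' : Type} [Field K'] {x : G.BPath} {M : Type}
    [AddCommGroup M] [Module K' M] (b : Module.Basis (orbit x) K' M) (k : ℤ) : Submodule K' M :=
  Submodule.span K' (⇑b '' {p : orbit x | TailEqLag (p : G.BPath) x k})

/-! ## The module `K L_x` -/

/-- The set `L_x` of pairs `(y, k)` with `y ∼_k x`. -/
def Lset (G : DirGraph) (x : G.BPath) : Set (G.BPath × ℤ) := {yk | TailEqLag yk.1 x yk.2}

/-- The underlying `K`-vector space of the module `K L_x`, with basis `L_x`. -/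
abbrev KLCarrier (G : DirGraph) (K : Type) [Field K] (x : G.BPath) : Type := (Lset G x) →₀ K

/-- Specification of the `L_K(E)`-module structure on `K L_x`, given by
`(μ ν^*) ⬝ (y, k) = (μ p, |μ| - |ν| + k)` when `y = ν p`, and `0` otherwise. The module
structure is encoded as a `K`-algebra homomorphism `ρ` to the endomorphism algebra. -/
def KLSpec (G : DirGraph) (K : Type) [Field K] (x : G.BPath)
    (ρ : LPA G K →ₐ[K] Module.End K (KLCarrier G K x)) : Prop :=
  (∀ (μ ν : G.FinPath), μ.rng = ν.rng → ∀ (yk zk : Lset G x) (p : G.BPath),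
      IsCat ν p (yk : G.BPath × ℤ).1 → IsCat μ p (zk : G.BPath × ℤ).1 →
      (zk : G.BPath × ℤ).2 = (yk : G.BPath × ℤ).2 + (μ.length : ℤ) - (ν.length : ℤ) →
      ρ (pathElem G K μ * pathStarElem G K ν) (Finsupp.single yk 1) = Finsupp.single zk 1) ∧
  (∀ (μ ν : G.FinPath), μ.rng = ν.rng → ∀ yk : Lset G x,
      (¬ ∃ p : G.BPath, IsCat ν p (yk : G.BPath × ℤ).1) →
      ρ (pathElem G K μ * pathStarElem G K ν) (Finsupp.single yk 1) = 0)

/-- The canonical grading of `K L_x`: `(y, k)` is homogeneous of degree `k`. -/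
noncomputable def KLgr (G : DirGraph) (K : Type) [Field K] (x : G.BPath) (k : ℤ) :
    Submodule K (KLCarrier G K x) :=
  Submodule.span K {m | ∃ yk : Lset G x, (yk : G.BPath × ℤ).2 = k ∧ m = Finsupp.single yk 1}

end DirGraph

/-!
If `x` is not rational, the lag `k` with `y ∼_k x` is unique for every `y ∈ [x]` (two lags would
give `x ∼_m x` with `m ≠ 0`, and then `x` is rational), so giving the basis vector `y` degree `k`
grades `V_{[x]}`: the monomial `μ ν^*` sends `y = ν p` to `μ p`, of lag `|μ| - |ν| + k`, and
kills `y` if `y` does not start with `ν`.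

Conversely, if `x ∼ c^∞`, the basis vector `c^∞` is fixed by the element `c`, of degree `|c| > 0`.
In a `ℤ`-grading, the lowest-degree component of a nonzero vector is not in the image of an
operator raising degrees by a positive amount, so such an operator fixes no nonzero vector.
-/

theorem Module.Basis.isInternal_span_image {ι κ R M : Type*} [DecidableEq κ] [Ring R]
    [AddCommGroup M] [Module R M] (b : Module.Basis ι R M) {S : κ → Set ι}
    (hS : Pairwise fun i j => Disjoint (S i) (S j)) (hcover : ⋃ k, S k = Set.univ) :
    DirectSum.IsInternal fun k => Submodule.span R (b '' S k) := by
  have span_iUnion (P : κ → Prop) : ⨆ (k) (_ : P k), Submodule.span R (b '' S k) =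
      Submodule.span R (b '' ⋃ (k) (_ : P k), S k) := by
    simp only [Set.image_iUnion, Submodule.span_iUnion]
  refine DirectSum.isInternal_submodule_of_iSupIndep_of_iSup_eq_top (fun k => ?_) ?_
  · rw [span_iUnion]
    refine b.linearIndependent.disjoint_span_image ?_
    simp only [Set.disjoint_iUnion_right]
    exact fun j hj => hS hj.symm
  · have := span_iUnion fun _ => True
    simp only [iSup_pos, Set.iUnion_true] at this
    rw [this, hcover, Set.image_univ, b.span_eq]

theorem DirectSum.IsInternal.eq_zero_of_map_eq_self {R M : Type*} [Semiring R] [AddCommMonoid M]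
    [Module R M] {W : ℤ → Submodule R M} (hW : DirectSum.IsInternal W) (f : M →+ M) {n : ℤ}
    (hn : 0 < n) (hf : ∀ k, ∀ y ∈ W k, f y ∈ W (n + k)) {b : M} (hb : f b = b) : b = 0 := by
  classical
  obtain ⟨d, rfl⟩ := hW.surjective b
  let fd : DirectSum ℤ (fun k => W k) :=
    ∑ k ∈ d.support, DirectSum.of (fun k => W k) (n + k) ⟨f (d k), hf k _ (d k).2⟩
  have hfd : fd = d := hW.injective <| by
    rw [← hb, ← DirectSum.sum_support_of d, map_sum, map_sum, map_sum]
    simp only [DirectSum.coeAddMonoidHom_of]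
  suffices d = 0 by rw [this, map_zero]
  by_contra hd
  obtain ⟨k₀, hk₀, hmin⟩ := d.support.exists_min_image id <| by
    rwa [Finset.nonempty_iff_ne_empty, Ne, DFinsupp.support_eq_empty]
  refine DFinsupp.mem_support_iff.mp hk₀ ?_
  rw [← hfd, DFinsupp.finsetSum_apply]
  refine Finset.sum_eq_zero fun k hk => DirectSum.of_eq_of_ne _ _ _ ?_
  have : k₀ ≤ k := hmin k hk
  omega

namespace DirGraph

variable {G : DirGraph}

section Paths

theorem FinPath.ext {μ ν : G.FinPath} (hsrc : μ.src = ν.src) (hedges : μ.edges = ν.edges) :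
    μ = ν := by
  cases μ; cases ν; cases hsrc; cases hedges; rfl

theorem InfPath.ext {p q : G.InfPath} (h : p.edges = q.edges) : p = q := by
  cases p; cases q; cases h; rfl

theorem FinPath.rng_eq_r_getElem {μ : G.FinPath} {i : ℕ} (h : i + 1 = μ.edges.length) :
    μ.rng = G.r (μ.edges[i]'(by omega)) := by
  simp [FinPath.rng, List.getLast?_eq_getElem?, ← h]

def FinPath.take (ξ : G.FinPath) (n : ℕ) : G.FinPath where
  src := ξ.src
  edges := ξ.edges.take n
  src_eq e he := by
    rw [List.head?_take] at he
    split_ifs at he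
    exacts [absurd he (by simp), ξ.src_eq e he]
  chain := ξ.chain.take n

theorem FinPath.take_of_length_le {ξ : G.FinPath} {n : ℕ} (h : ξ.edges.length ≤ n) :
    ξ.take n = ξ :=
  FinPath.ext rfl (List.take_of_length_le h)

theorem FinPath.s_eq_rng_take {ξ : G.FinPath} {n : ℕ} {e : G.E}
    (h : e ∈ (ξ.edges.drop n).head?) : G.s e = (ξ.take n).rng := by
  rw [List.head?_drop] at h
  obtain ⟨hn, rfl⟩ : ∃ hn : n < ξ.edges.length, ξ.edges[n] = e := by
    simpa [List.getElem?_eq_some_iff] using h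
  cases n with
  | zero =>
    rw [ξ.src_eq _ (by simp [List.head?_eq_getElem?])]
    simp [FinPath.take, FinPath.rng]
  | succ m =>
    rw [FinPath.rng_eq_r_getElem (i := m) (by simp [FinPath.take]; omega)]
    simpa [FinPath.take] using (List.IsChain.getElem ξ.chain m hn).symm

def FinPath.drop (ξ : G.FinPath) (n : ℕ) : G.FinPath where
  src := (ξ.take n).rng
  edges := ξ.edges.drop n
  src_eq _ he := FinPath.s_eq_rng_take he
  chain := ξ.chain.drop n

theorem FinPath.rng_drop (ξ : G.FinPath) (n : ℕ) : (ξ.drop n).rng = ξ.rng := by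
  by_cases h : ξ.edges.length ≤ n
  · simp [FinPath.drop, FinPath.rng, List.drop_of_length_le h, FinPath.take_of_length_le h]
  · have hd : ξ.edges.drop n ≠ [] := by simp; omega
    obtain ⟨a, ha⟩ := Option.ne_none_iff_exists'.mp (List.getLast?_eq_none_iff.not.mpr hd)
    have hlast : ξ.edges.getLast? = some a := by
      rw [← List.take_append_drop n ξ.edges, List.getLast?_append_of_ne_nil _ hd, ha]
    simp [FinPath.rng, FinPath.drop, ha, hlast]

def InfPath.take (ξ : G.InfPath) (n : ℕ) : G.FinPath where
  src := ξ.src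
  edges := List.ofFn fun i : Fin n => ξ.edges i
  src_eq e he := by
    cases n with
    | zero => simp at he
    | succ m =>
      rw [List.ofFn_succ, List.head?_cons, Option.mem_some_iff] at he
      exact he ▸ rfl
  chain := List.isChain_iff_getElem.mpr fun i _ => by simpa using ξ.chain i

def InfPath.drop (ξ : G.InfPath) (n : ℕ) : G.InfPath where
  edges i := ξ.edges (n + i)
  chain i := ξ.chain (n + i)

theorem InfPath.rng_take (ξ : G.InfPath) (n : ℕ) : (ξ.take n).rng = G.s (ξ.edges n) := by
  cases n with
  | zero => simp [InfPath.take, FinPath.rng, InfPath.src]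
  | succ m =>
    rw [FinPath.rng_eq_r_getElem (i := m) (by simp [InfPath.take])]
    simp only [InfPath.take, List.getElem_ofFn]
    exact ξ.chain m

end Paths

section BoundaryPaths

def BPath.LengthGe (y : G.BPath) (n : ℕ) : Prop := ∀ ξ, y.1 = Sum.inl ξ → n ≤ ξ.edges.length

theorem BPath.lengthGe_zero (y : G.BPath) : y.LengthGe 0 := fun _ _ => Nat.zero_le _

theorem BPath.LengthGe.mono {y : G.BPath} {m n : ℕ} (hy : y.LengthGe n) (h : m ≤ n) :
    y.LengthGe m :=
  fun ξ hξ => h.trans (hy ξ hξ)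

def BPath.take (y : G.BPath) (n : ℕ) : G.FinPath :=
  match y.1 with
  | Sum.inl ξ => ξ.take n
  | Sum.inr ξ => ξ.take n

def BPath.drop (y : G.BPath) (n : ℕ) : G.BPath :=
  match y with
  | ⟨Sum.inl ξ, h⟩ => ⟨Sum.inl (ξ.drop n), by
      rintro μ ⟨⟩
      rw [FinPath.rng_drop]
      exact h ξ rfl⟩
  | ⟨Sum.inr ξ, _⟩ => ⟨Sum.inr (ξ.drop n), by simp⟩

theorem isCat_inl_iff {μ q ξ : G.FinPath} {hq hξ} :
    IsCat μ (⟨Sum.inl q, hq⟩ : G.BPath) ⟨Sum.inl ξ, hξ⟩ ↔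
      μ.rng = q.src ∧ ξ.src = μ.src ∧ ξ.edges = μ.edges ++ q.edges := Iff.rfl

theorem isCat_inr_iff {μ : G.FinPath} {q ξ : G.InfPath} {hq hξ} :
    IsCat μ (⟨Sum.inr q, hq⟩ : G.BPath) ⟨Sum.inr ξ, hξ⟩ ↔
      μ.rng = q.src ∧
      (∀ (i : ℕ) (h : i < μ.edges.length), ξ.edges i = μ.edges.get ⟨i, h⟩) ∧
      ∀ i : ℕ, ξ.edges (μ.edges.length + i) = q.edges i := Iff.rfl

theorem not_isCat_inl_inr {μ q : G.FinPath} {ξ : G.InfPath} {hq hξ} :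
    ¬ IsCat μ (⟨Sum.inl q, hq⟩ : G.BPath) ⟨Sum.inr ξ, hξ⟩ := fun h => h.2

theorem not_isCat_inr_inl {μ : G.FinPath} {q : G.InfPath} {ξ : G.FinPath} {hq hξ} :
    ¬ IsCat μ (⟨Sum.inr q, hq⟩ : G.BPath) ⟨Sum.inl ξ, hξ⟩ := fun h => h.2

theorem BPath.drop_zero (y : G.BPath) : y.drop 0 = y := by
  obtain ⟨ξ | ξ, hy⟩ := y
  · rfl
  · exact Subtype.ext (congrArg Sum.inr (InfPath.ext (funext fun i => by
      simp [InfPath.drop])))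

theorem BPath.src_take (y : G.BPath) (n : ℕ) : (y.take n).src = y.src := by
  obtain ⟨ξ | ξ, hy⟩ := y <;> rfl

theorem BPath.length_take {y : G.BPath} {n : ℕ} (h : y.LengthGe n) :
    (y.take n).edges.length = n := by
  obtain ⟨ξ | ξ, hy⟩ := y
  · simpa [BPath.take, FinPath.take] using h ξ rfl
  · simp [BPath.take, InfPath.take]

theorem BPath.isCat_take_drop {y : G.BPath} {n : ℕ} (h : y.LengthGe n) :
    IsCat (y.take n) (y.drop n) y := by
  obtain ⟨ξ | ξ, hy⟩ := y
  · exact isCat_inl_iff.mpr ⟨rfl, rfl, (List.take_append_drop _ _).symm⟩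
  · refine isCat_inr_iff.mpr ⟨?_, fun i hi => ?_, fun i => ?_⟩
    · exact (InfPath.rng_take ξ n).trans (by simp [InfPath.drop, InfPath.src])
    · simp [BPath.take, InfPath.take]
    · simp [BPath.take, InfPath.take, InfPath.drop]

theorem IsCat.eq_take_drop {μ : G.FinPath} {p y : G.BPath} (h : IsCat μ p y) :
    y.LengthGe μ.edges.length ∧ μ = y.take μ.edges.length ∧ p = y.drop μ.edges.length := by
  obtain ⟨ξ | ξ, hy⟩ := y <;> obtain ⟨q | q, hp⟩ := p
  · obtain ⟨h1, h2, h3⟩ := isCat_inl_iff.mp h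
    have htake : μ = ξ.take μ.edges.length :=
      FinPath.ext h2.symm (by simp [FinPath.take, h3])
    refine ⟨?_, htake, Subtype.ext (congrArg Sum.inl (FinPath.ext ?_ ?_))⟩
    · rintro _ ⟨⟩
      simp [h3]
    · exact h1.symm.trans (congrArg FinPath.rng htake)
    · simp [FinPath.drop, h3]
  · exact absurd h not_isCat_inr_inl
  · exact absurd h not_isCat_inl_inr
  · obtain ⟨h1, h2, h3⟩ := isCat_inr_iff.mp h
    refine ⟨fun _ h => by simp at h, FinPath.ext ?_ ?_,
      Subtype.ext (congrArg Sum.inr (InfPath.ext (funext fun i => (h3 i).symm)))⟩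
    · change μ.src = G.s (ξ.edges 0)
      cases hn : μ.edges with
      | nil =>
        have hrng : μ.rng = μ.src := by simp [FinPath.rng, hn]
        simpa [hn, hrng, InfPath.src] using h1.trans (congrArg G.s (h3 0)).symm
      | cons a t =>
        rw [← μ.src_eq a (by simp [hn]), h2 0 (by simp [hn])]
        simp [hn]
    · exact List.ext_getElem (by simp [BPath.take, InfPath.take])
        fun i h _ => by simpa [BPath.take, InfPath.take] using (h2 i h).symm

theorem IsCat.src_eq {μ : G.FinPath} {p y : G.BPath} (h : IsCat μ p y) : μ.src = y.src := by
  rw [h.eq_take_drop.2.1, BPath.src_take]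

theorem FinPath.rng_eq_of_edges_eq_append {δ μ γ : G.FinPath} (hs : δ.src = μ.src)
    (he : δ.edges = μ.edges ++ γ.edges) (hl : μ.rng = γ.src) : δ.rng = γ.rng := by
  by_cases hγ : γ.edges = []
  · rw [FinPath.ext hs (by rw [he, hγ, List.append_nil]), hl]
    simp [FinPath.rng, hγ]
  · obtain ⟨b, hb⟩ := Option.ne_none_iff_exists'.mp (List.getLast?_eq_none_iff.not.mpr hγ)
    simp [FinPath.rng, he, List.getLast?_append_of_ne_nil _ hγ, hb]

def FinPath.append (μ γ : G.FinPath) (h : μ.rng = γ.src) : G.FinPath where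
  src := μ.src
  edges := μ.edges ++ γ.edges
  src_eq e he := by
    cases hμ : μ.edges with
    | nil =>
      rw [hμ, List.nil_append] at he
      rw [γ.src_eq e he, ← h]
      simp [FinPath.rng, hμ]
    | cons a t =>
      simp only [hμ, List.cons_append, List.head?_cons, Option.mem_some_iff] at he
      exact he ▸ μ.src_eq _ (by simp [hμ])
  chain := List.isChain_append.mpr ⟨μ.chain, γ.chain, fun a ha b hb => by
    rw [γ.src_eq b hb, ← h, FinPath.rng, Option.mem_def.mp ha]
    rfl⟩

theorem FinPath.rng_append (μ γ : G.FinPath) (h : μ.rng = γ.src) :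
    (μ.append γ h).rng = γ.rng :=
  FinPath.rng_eq_of_edges_eq_append (μ := μ) rfl rfl h

theorem FinPath.length_append (μ γ : G.FinPath) (h : μ.rng = γ.src) :
    (μ.append γ h).edges.length = μ.edges.length + γ.edges.length :=
  List.length_append

theorem IsCat.append {μ γ δ : G.FinPath} {p q z : G.BPath} (h1 : IsCat μ p z)
    (h2 : IsCat γ q p) (hs : δ.src = μ.src) (he : δ.edges = μ.edges ++ γ.edges) :
    IsCat δ q z := by
  have hlink : μ.rng = γ.src := h1.1.trans h2.src_eq.symm
  have hrng : δ.rng = q.src := (FinPath.rng_eq_of_edges_eq_append hs he hlink).trans h2.1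
  obtain ⟨ζ | ζ, hz⟩ := z <;> obtain ⟨π | π, hp⟩ := p <;> obtain ⟨ρ | ρ, hq⟩ := q <;>
    first
    | exact absurd h1 not_isCat_inl_inr | exact absurd h1 not_isCat_inr_inl
    | exact absurd h2 not_isCat_inl_inr | exact absurd h2 not_isCat_inr_inl
    | skip
  · obtain ⟨-, a2, a3⟩ := isCat_inl_iff.mp h1
    obtain ⟨-, -, b3⟩ := isCat_inl_iff.mp h2
    exact isCat_inl_iff.mpr ⟨hrng, a2.trans hs.symm, by rw [he, a3, b3, List.append_assoc]⟩
  · obtain ⟨-, a2, a3⟩ := isCat_inr_iff.mp h1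
    obtain ⟨-, b2, b3⟩ := isCat_inr_iff.mp h2
    refine isCat_inr_iff.mpr ⟨hrng, fun i hi => ?_, fun i => ?_⟩
    · simp only [List.get_eq_getElem, he, List.getElem_append]
      split_ifs with hlt
      · simpa using a2 i hlt
      · have := a3 (i - μ.edges.length)
        rw [Nat.add_sub_cancel' (by omega)] at this
        rw [this, b2 _ (by simp [he] at hi; omega), List.get_eq_getElem]
    · rw [he, List.length_append, Nat.add_assoc, a3, b3]

theorem BPath.LengthGe.drop {y : G.BPath} {n m : ℕ} (h : y.LengthGe (n + m)) :
    (y.drop n).LengthGe m := by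
  obtain ⟨ξ | ξ, hy⟩ := y
  · rintro _ ⟨⟩
    have := h ξ rfl
    simp only [FinPath.drop, List.length_drop]
    omega
  · rintro _ ⟨⟩

theorem BPath.drop_drop_and_take_add {y : G.BPath} {n m : ℕ} (h : y.LengthGe (n + m)) :
    (y.drop n).drop m = y.drop (n + m) ∧
      (y.take (n + m)).edges = (y.take n).edges ++ ((y.drop n).take m).edges := by
  have hn : y.LengthGe n := h.mono (by omega)
  have c1 := BPath.isCat_take_drop hn
  have c2 := BPath.isCat_take_drop h.drop
  have hlink : (y.take n).rng = ((y.drop n).take m).src := c1.1.trans (BPath.src_take _ _).symm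
  obtain ⟨-, ht, hd⟩ := (c1.append c2 (δ := (y.take n).append _ hlink) rfl rfl).eq_take_drop
  rw [FinPath.length_append, BPath.length_take hn, BPath.length_take h.drop] at ht hd
  exact ⟨hd, by rw [← ht]; rfl⟩

theorem BPath.drop_drop {y : G.BPath} {n m : ℕ} (h : y.LengthGe (n + m)) :
    (y.drop n).drop m = y.drop (n + m) :=
  (BPath.drop_drop_and_take_add h).1

theorem BPath.take_add {y : G.BPath} {n m : ℕ} (h : y.LengthGe (n + m)) :
    (y.take (n + m)).edges = (y.take n).edges ++ ((y.drop n).take m).edges :=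
  (BPath.drop_drop_and_take_add h).2

noncomputable def FinPath.cat (μ : G.FinPath) (p : G.BPath) (h : μ.rng = p.src) : G.BPath :=
  match p with
  | ⟨Sum.inl q, hq⟩ => ⟨Sum.inl (μ.append q h), by
      rintro _ ⟨⟩
      exact (show (μ.append q h).rng = q.rng from FinPath.rng_append μ q h) ▸ hq q rfl⟩
  | ⟨Sum.inr q, _⟩ => ⟨Sum.inr
      { edges i := if hi : i < μ.edges.length then μ.edges[i] else q.edges (i - μ.edges.length)
        chain i := by
          by_cases h1 : i + 1 < μ.edges.length
          · simpa [h1, show i < μ.edges.length by omega] using List.IsChain.getElem μ.chain i h1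
          by_cases h2 : i < μ.edges.length
          · have h3 : i + 1 - μ.edges.length = 0 := by omega
            simp only [h1, h2, h3, dite_true, dite_false]
            exact (FinPath.rng_eq_r_getElem (by omega)).symm.trans h
          · simpa [h1, h2, show i + 1 - μ.edges.length = i - μ.edges.length + 1 by omega]
              using q.chain (i - μ.edges.length) }, by simp⟩

theorem FinPath.isCat_cat (μ : G.FinPath) (p : G.BPath) (h : μ.rng = p.src) :
    IsCat μ p (μ.cat p h) := by
  obtain ⟨q | q, hp⟩ := p
  · exact isCat_inl_iff.mpr ⟨h, rfl, rfl⟩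
  · exact isCat_inr_iff.mpr ⟨h, fun i hi => by simp [hi], fun i => by simp⟩

end BoundaryPaths

section TailEquivalence

theorem IsCat.tailEqLag {μ : G.FinPath} {p y : G.BPath} (h : IsCat μ p y) :
    TailEqLag y p μ.length := by
  have hp := BPath.isCat_take_drop (BPath.lengthGe_zero p)
  rw [BPath.drop_zero] at hp
  refine ⟨μ, p.take 0, p, h, hp, ?_⟩
  simp [FinPath.length, BPath.length_take (BPath.lengthGe_zero p)]

theorem TailEqLag.symm {x y : G.BPath} {k : ℤ} (h : TailEqLag x y k) : TailEqLag y x (-k) := by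
  obtain ⟨μ, ν, p, h1, h2, h3⟩ := h
  exact ⟨ν, μ, p, h2, h1, by omega⟩

theorem IsCat.exists_isCat_of_le {ν α : G.FinPath} {p q y : G.BPath} (hp : IsCat ν p y)
    (hq : IsCat α q y) (hle : ν.edges.length ≤ α.edges.length) :
    ∃ δ : G.FinPath, δ.edges.length = α.edges.length - ν.edges.length ∧ IsCat δ q p := by
  obtain ⟨-, -, rfl⟩ := hp.eq_take_drop
  obtain ⟨hα, -, rfl⟩ := hq.eq_take_drop
  have h : y.LengthGe (ν.edges.length + (α.edges.length - ν.edges.length)) := by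
    rwa [Nat.add_sub_cancel' hle]
  refine ⟨_, BPath.length_take h.drop, ?_⟩
  have := BPath.isCat_take_drop h.drop
  rwa [BPath.drop_drop h, Nat.add_sub_cancel' hle] at this

theorem TailEqLag.trans {z y x : G.BPath} {m k : ℤ} (h1 : TailEqLag z y m)
    (h2 : TailEqLag y x k) : TailEqLag z x (m + k) := by
  obtain ⟨μ, ν, p, hz, hyp, hm⟩ := h1
  obtain ⟨α, β, q, hyq, hx, hk⟩ := h2
  simp only [FinPath.length] at hm hk
  rcases le_total ν.edges.length α.edges.length with hle | hle
  · obtain ⟨δ, hδ, hqp⟩ := hyp.exists_isCat_of_le hyq hle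
    have hlink : μ.rng = δ.src := hz.1.trans hqp.src_eq.symm
    refine ⟨μ.append δ hlink, β, q, hz.append hqp rfl rfl, hx, ?_⟩
    simp only [FinPath.length, FinPath.length_append, hδ]
    omega
  · obtain ⟨δ, hδ, hpq⟩ := hyq.exists_isCat_of_le hyp hle
    have hlink : β.rng = δ.src := hx.1.trans hpq.src_eq.symm
    refine ⟨μ, β.append δ hlink, p, hz, hx.append hpq rfl rfl, ?_⟩
    simp only [FinPath.length, FinPath.length_append, hδ]
    omega

theorem TailEq.symm {x y : G.BPath} (h : TailEq x y) : TailEq y x :=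
  let ⟨k, hk⟩ := h; ⟨-k, hk.symm⟩

theorem TailEq.trans {z y x : G.BPath} (h1 : TailEq z y) (h2 : TailEq y x) : TailEq z x :=
  let ⟨m, hm⟩ := h1; let ⟨k, hk⟩ := h2; ⟨m + k, hm.trans hk⟩

/-- `x = μ p = ν p` with `|μ| > |ν|` gives `p = c p`, i.e. `p = c^∞`, for the segment `c` of `x`
between positions `|ν|` and `|μ|`. -/
theorem isRational_of_tailEqLag_self_of_pos {x : G.BPath} {m : ℤ} (hm : 0 < m)
    (h : TailEqLag x x m) : IsRational x := by
  obtain ⟨μ, ν, p, hμ, hν, hlen⟩ := h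
  simp only [FinPath.length] at hlen
  obtain ⟨c, hc, hcp⟩ := hν.exists_isCat_of_le hμ (by omega)
  exact ⟨c, p, by simp only [FinPath.length]; omega, hcp, ⟨_, hν.tailEqLag⟩⟩

theorem isRational_of_tailEqLag_self {x : G.BPath} {m : ℤ} (hm : m ≠ 0)
    (h : TailEqLag x x m) : IsRational x := by
  rcases hm.lt_or_gt with hneg | hpos
  · exact isRational_of_tailEqLag_self_of_pos (neg_pos.mpr hneg) h.symm
  · exact isRational_of_tailEqLag_self_of_pos hpos h

theorem TailEqLag.lag_eq_of_not_isRational {x y : G.BPath} {k k' : ℤ} (hx : ¬ IsRational x)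
    (h : TailEqLag y x k) (h' : TailEqLag y x k') : k = k' := by
  by_contra hne
  exact hx (isRational_of_tailEqLag_self (by omega) (h.symm.trans h'))

end TailEquivalence

section ChenModule

theorem IsCat.mem_orbit_iff {x : G.BPath} {μ : G.FinPath} {p y : G.BPath} (h : IsCat μ p y) :
    p ∈ orbit x ↔ y ∈ orbit x :=
  ⟨TailEq.trans ⟨_, h.tailEqLag⟩, TailEq.trans (TailEq.symm ⟨_, h.tailEqLag⟩)⟩

theorem IsCat.exists_of_edges_eq_cons {μ : G.FinPath} {p y : G.BPath} {e : G.E}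
    {l : List G.E} (h : IsCat μ p y) (he : μ.edges = e :: l) :
    ∃ μ' : G.FinPath, μ'.edges = l ∧ IsCat (singleE G e) (y.drop 1) y ∧
      IsCat μ' p (y.drop 1) := by
  have hsrc := h.src_eq
  obtain ⟨hlen, hμ, rfl⟩ := h.eq_take_drop
  have hμlen : μ.edges.length = 1 + l.length := by simp [he, add_comm]
  rw [hμlen] at hlen ⊢
  have hsplit := BPath.take_add hlen
  rw [← hμlen, ← hμ, he] at hsplit
  obtain ⟨a, ha⟩ := List.length_eq_one_iff.mp (BPath.length_take (hlen.mono (by omega)))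
  rw [ha, List.singleton_append, List.cons.injEq] at hsplit
  obtain ⟨rfl, hl⟩ := hsplit
  have htake : y.take 1 = singleE G e :=
    FinPath.ext (by rw [BPath.src_take, ← hsrc, ← μ.src_eq e (by simp [he])]; rfl) ha
  refine ⟨_, hl.symm, htake ▸ BPath.isCat_take_drop (hlen.mono (by omega)), ?_⟩
  simpa only [BPath.drop_drop hlen] using BPath.isCat_take_drop hlen.drop

theorem isCat_self_of_edges_eq_nil {μ : G.FinPath} {y : G.BPath} (he : μ.edges = [])
    (hs : μ.src = y.src) : IsCat μ y y := by
  have h := BPath.isCat_take_drop (BPath.lengthGe_zero y)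
  rwa [BPath.drop_zero, FinPath.ext (μ := y.take 0) (ν := μ) (by rw [BPath.src_take, hs])
    (by rw [he, ← List.length_eq_zero_iff, BPath.length_take (BPath.lengthGe_zero y)])] at h

variable {K : Type} [Field K]

theorem prod_map_ofG_reverse_cons (e : G.E) (l : List G.E) :
    (((e :: l).reverse).map (ofG G K)).prod = ((l.reverse).map (ofG G K)).prod * ofG G K e := by
  simp

variable {x : G.BPath} {M : Type} [AddCommGroup M] [Module K M] [Module (LPA G K) M]
  (sp : ChenSpec G K (fun _ => 1) x M)
include sp

theorem ChenSpec.prod_ofE_smul_basis {μ : G.FinPath} {p y : G.BPath} (hp : p ∈ orbit x)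
    (hy : y ∈ orbit x) (h : IsCat μ p y) :
    (μ.edges.map (ofE G K)).prod • sp.basis ⟨p, hp⟩ = sp.basis ⟨y, hy⟩ := by
  induction hl : μ.edges generalizing μ y with
  | nil =>
    obtain ⟨-, -, rfl⟩ := h.eq_take_drop
    simp [hl, BPath.drop_zero]
  | cons e l ih =>
    obtain ⟨μ', hμ'l, he, hμ'⟩ := h.exists_of_edges_eq_cons hl
    have hy' := he.mem_orbit_iff.mpr hy
    rw [List.map_cons, List.prod_cons, mul_smul, ih hy' hμ' hμ'l, sp.act_e e _ ⟨y, hy⟩ he,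
      one_smul]

theorem ChenSpec.prod_ofG_smul_basis {μ : G.FinPath} {p y : G.BPath} (hp : p ∈ orbit x)
    (hy : y ∈ orbit x) (h : IsCat μ p y) :
    (μ.edges.reverse.map (ofG G K)).prod • sp.basis ⟨y, hy⟩ = sp.basis ⟨p, hp⟩ := by
  induction hl : μ.edges generalizing μ y with
  | nil =>
    obtain ⟨-, -, rfl⟩ := h.eq_take_drop
    simp [hl, BPath.drop_zero]
  | cons e l ih =>
    obtain ⟨μ', hμ'l, he, hμ'⟩ := h.exists_of_edges_eq_cons hl
    have hy' := he.mem_orbit_iff.mpr hy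
    rw [prod_map_ofG_reverse_cons, mul_smul, sp.act_g e ⟨_, hy'⟩ ⟨y, hy⟩ he, inv_one, one_smul,
      ih hy' hμ' hμ'l]

theorem ChenSpec.prod_ofG_smul_basis_eq_zero {μ : G.FinPath} {y : G.BPath} (hy : y ∈ orbit x)
    (hsrc : μ.src = y.src) (h : ¬ ∃ p, IsCat μ p y) :
    (μ.edges.reverse.map (ofG G K)).prod • sp.basis ⟨y, hy⟩ = 0 := by
  induction hl : μ.edges generalizing μ y with
  | nil => exact absurd ⟨y, isCat_self_of_edges_eq_nil hl hsrc⟩ h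
  | cons e l ih =>
    rw [prod_map_ofG_reverse_cons, mul_smul]
    by_cases he : ∃ y', IsCat (singleE G e) y' y
    · obtain ⟨y', he⟩ := he
      have hy' := he.mem_orbit_iff.mpr hy
      rw [sp.act_g e ⟨y', hy'⟩ ⟨y, hy⟩ he, inv_one, one_smul]
      have hchain := List.isChain_cons.mp (hl ▸ μ.chain)
      let μ' : G.FinPath := ⟨G.r e, l, fun f hf => (hchain.1 f hf).symm, hchain.2⟩
      refine ih (μ := μ') hy' ((by simp [singleE, FinPath.rng] : G.r e = _).trans he.1) ?_ rfl
      rintro ⟨p, hp⟩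
      -- `y = e y'` and `y' = μ' p` would give `y = μ p`
      exact h ⟨p, he.append hp (μ.src_eq e (by simp [hl])).symm (by simp [hl, singleE, μ'])⟩
    · rw [sp.act_g_zero e ⟨y, hy⟩ (by simpa using he), smul_zero]

theorem ChenSpec.pathElem_smul_basis {μ : G.FinPath} {p y : G.BPath} (hp : p ∈ orbit x)
    (hy : y ∈ orbit x) (h : IsCat μ p y) :
    pathElem G K μ • sp.basis ⟨p, hp⟩ = sp.basis ⟨y, hy⟩ := by
  rw [pathElem, mul_smul, sp.prod_ofE_smul_basis hp hy h, sp.act_v, if_pos h.src_eq]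

theorem ChenSpec.pathStarElem_smul_basis {μ : G.FinPath} {p y : G.BPath} (hp : p ∈ orbit x)
    (hy : y ∈ orbit x) (h : IsCat μ p y) :
    pathStarElem G K μ • sp.basis ⟨y, hy⟩ = sp.basis ⟨p, hp⟩ := by
  rw [pathStarElem, mul_smul, sp.act_v, if_pos h.src_eq, sp.prod_ofG_smul_basis hp hy h]

theorem ChenSpec.pathStarElem_smul_basis_eq_zero {μ : G.FinPath} {y : G.BPath}
    (hy : y ∈ orbit x) (h : ¬ ∃ p, IsCat μ p y) :
    pathStarElem G K μ • sp.basis ⟨y, hy⟩ = 0 := by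
  rw [pathStarElem, mul_smul, sp.act_v]
  split_ifs with hsrc
  · exact sp.prod_ofG_smul_basis_eq_zero hy hsrc h
  · exact smul_zero _

end ChenModule

section Grading

variable {K : Type} [Field K]

theorem ofV_mul_self (v : G.V) : ofV G K v * ofV G K v = ofV G K v := by
  rw [ofV, ← map_mul]
  exact RingQuot.mkAlgHom_rel K (LRel.vv_eq v)

theorem ofE_mul_ofV_r (e : G.E) : ofE G K e * ofV G K (G.r e) = ofE G K e := by
  rw [ofE, ofV, ← map_mul]
  exact RingQuot.mkAlgHom_rel K (LRel.e1r e)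

theorem pathElem_mul_ofV_rng (μ : G.FinPath) :
    pathElem G K μ * ofV G K μ.rng = pathElem G K μ := by
  rcases List.eq_nil_or_concat μ.edges with h | ⟨l, e, h⟩
  · have hrng : μ.rng = μ.src := by simp [FinPath.rng, h]
    simp [pathElem, hrng, h, ofV_mul_self]
  · have hrng : μ.rng = G.r e := by simp [FinPath.rng, h]
    simp [pathElem, hrng, h, mul_assoc, ofE_mul_ofV_r]

theorem pathElem_mem_LPAdeg (μ : G.FinPath) : pathElem G K μ ∈ LPAdeg G K μ.length := by
  refine Submodule.subset_span
    ⟨μ, vertexPath G μ.rng, rfl, by simp [FinPath.length, vertexPath], ?_⟩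
  simp [pathStarElem, vertexPath, pathElem_mul_ofV_rng]

variable {x : G.BPath} {M : Type} [AddCommGroup M] [Module K M] [Module (LPA G K) M]
  (sp : ChenSpec G K (fun _ => 1) x M)
include sp

theorem ChenSpec.not_isRational_of_isModuleGrading {W : ℤ → Submodule K M}
    (hW : IsModuleGrading G K M W) : ¬ IsRational x := by
  rintro ⟨c, p, hc, hcp, hxp⟩
  have hp : p ∈ orbit x := hxp.symm
  refine sp.basis.ne_zero ⟨p, hp⟩ (hW.1.eq_zero_of_map_eq_self
    (DistribSMul.toAddMonoidHom M (pathElem G K c)) (Int.natCast_pos.mpr hc)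
    (fun k y hy => hW.2 _ k _ y (pathElem_mem_LPAdeg c) hy) ?_)
  exact sp.pathElem_smul_basis hp hp hcp

theorem ChenSpec.isInternal_chenW (hx : ¬ IsRational x) : DirectSum.IsInternal (chenW sp.basis) :=
  sp.basis.isInternal_span_image
    (fun _ _ hne => Set.disjoint_left.mpr fun _ hk hk' =>
      hne (hk.lag_eq_of_not_isRational hx hk'))
    (Set.iUnion_eq_univ_iff.mpr fun p => p.2)

theorem ChenSpec.pathElem_mul_pathStarElem_smul_basis_mem {μ ν : G.FinPath} (hrng : μ.rng = ν.rng)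
    {p : orbit x} {k : ℤ} (hp : TailEqLag (p : G.BPath) x k) :
    (pathElem G K μ * pathStarElem G K ν) • sp.basis p ∈
      chenW sp.basis (μ.length - ν.length + k) := by
  rw [mul_smul]
  by_cases hν : ∃ q, IsCat ν q p
  · obtain ⟨q, hνq⟩ := hν
    have hq := hνq.mem_orbit_iff.mpr p.2
    have hμq := μ.isCat_cat q (hrng.trans hνq.1)
    have hz := hμq.mem_orbit_iff.mp hq
    rw [sp.pathStarElem_smul_basis hq p.2 hνq, sp.pathElem_smul_basis hq hz hμq]
    -- `μ q ∼_{|μ|} q ∼_{-|ν|} ν q = p ∼_k x`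
    refine Submodule.subset_span ⟨⟨_, hz⟩, ?_, rfl⟩
    simpa [sub_eq_add_neg, add_assoc] using hμq.tailEqLag.trans (hνq.tailEqLag.symm.trans hp)
  · rw [sp.pathStarElem_smul_basis_eq_zero p.2 hν, smul_zero]
    exact Submodule.zero_mem _

theorem ChenSpec.smul_mem_chenW [IsScalarTower K (LPA G K) M] {m k : ℤ} {a : LPA G K} {y : M}
    (ha : a ∈ LPAdeg G K m) (hy : y ∈ chenW sp.basis k) : a • y ∈ chenW sp.basis (m + k) := by
  induction ha using Submodule.span_induction generalizing y with
  | mem a ha =>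
    obtain ⟨μ, ν, hrng, rfl, rfl⟩ := ha
    induction hy using Submodule.span_induction with
    | mem _ hy =>
      obtain ⟨p, hp, rfl⟩ := hy
      exact sp.pathElem_mul_pathStarElem_smul_basis_mem hrng hp
    | zero => simp
    | add u v _ _ hu hv => simpa only [smul_add] using add_mem hu hv
    | smul r u _ hu => simpa only [smul_comm _ r u] using Submodule.smul_mem _ r hu
  | zero => simp
  | add a b _ _ ha hb => simpa only [add_smul] using add_mem (ha hy) (hb hy)
  | smul r a _ ha => simpa only [smul_assoc] using Submodule.smul_mem _ r (ha hy)

end Grading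

end DirGraph

open DirGraph

/-- for `x ∈ ∂E`, the simple `L_K(E)`-module `V_{[x]}` admits a
`ℤ`-grading making it a graded `L_K(E)`-module if and only if `x` is not a rational
path. -/
theorem stmt_10 (G : DirGraph) (K : Type) [Field K] (x : G.BPath)
    (M : Type) [AddCommGroup M] [Module K M] [Module (LPA G K) M]
    [IsScalarTower K (LPA G K) M]
    (sp : ChenSpec G K (fun _ => 1) x M) :
    (∃ W : ℤ → Submodule K M, IsModuleGrading G K M W) ↔ ¬ IsRational x :=
  ⟨fun ⟨_, hW⟩ => sp.not_isRational_of_isModuleGrading hW,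
    fun hx => ⟨chenW sp.basis, sp.isInternal_chenW hx, fun _ _ _ _ => sp.smul_mem_chenW⟩⟩
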